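/- arXiv:2412.12228 — 4 statements merged into one kernel-verified Lean document; each statement's English description precedes it below -/
import Mathlib

section
/- The systems x₁ = max(x₂,x₃), x₂ = -x₃+1, x₃ = 0.5x₃+0.2 and x₁' = max(x₂',x₃'), x₂' = -x₃'+1, x₃' = 0.5x₃'+0.25 each have a unique solution, and although the constant term increased (0.25 > 0.2), the first component of the solution strictly decreased: 0.5 < 0.6. Hence monotonicity of the solution in the constant vector fails. -/
theorem stmt11 :
    (∃! p : ℝ × ℝ × ℝ,
      p.1 = max p.2.1 p.2.2 ∧ p.2.1 = -p.2.2 + 1 ∧ p.2.2 = 0.5 * p.2.2 + 0.2) ∧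
    (∃! p : ℝ × ℝ × ℝ,
      p.1 = max p.2.1 p.2.2 ∧ p.2.1 = -p.2.2 + 1 ∧ p.2.2 = 0.5 * p.2.2 + 0.25) ∧
    (∀ p q : ℝ × ℝ × ℝ,
      (p.1 = max p.2.1 p.2.2 ∧ p.2.1 = -p.2.2 + 1 ∧ p.2.2 = 0.5 * p.2.2 + 0.2) →
      (q.1 = max q.2.1 q.2.2 ∧ q.2.1 = -q.2.2 + 1 ∧ q.2.2 = 0.5 * q.2.2 + 0.25) →
      (0.2 : ℝ) < 0.25 ∧ q.1 < p.1) := by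
  refine ⟨⟨(0.6, 0.6, 0.4), ⟨by norm_num, by norm_num, by norm_num⟩, ?_⟩,
    ⟨(0.5, 0.5, 0.5), ⟨by norm_num, by norm_num, by norm_num⟩, ?_⟩, ?_⟩
  · rintro ⟨a, b, c⟩ ⟨h1, h2, h3⟩
    have hc : c = 0.4 := by linarith
    subst hc
    have hb : b = 0.6 := by linarith
    subst hb
    simp only [Prod.mk.injEq]
    simp only at h1
    rw [h1]; norm_num
  · rintro ⟨a, b, c⟩ ⟨h1, h2, h3⟩
    have hc : c = 0.5 := by linarith
    subst hc
    have hb : b = 0.5 := by linarith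
    subst hb
    simp only [Prod.mk.injEq]
    simp only at h1
    rw [h1]; norm_num
  · rintro ⟨a, b, c⟩ ⟨a', b', c'⟩ ⟨h1, h2, h3⟩ ⟨h1', h2', h3'⟩
    refine ⟨by norm_num, ?_⟩
    have hc : c = 0.4 := by linarith
    have hb : b = 0.6 := by linarith
    have hc' : c' = 0.5 := by linarith
    have hb' : b' = 0.5 := by linarith
    simp only at h1 h1'
    rw [h1, h1', hb, hc, hb', hc']
    norm_num
end

section
/- Let a₁,...,a_m be positive integers. The set {a₁,...,a_m} can be partitioned into two subsets with equal sums if and only if there exist reals x₁,...,x_{2m+2} satisfying: x_i = min(x_{i+m}, x_{2m+1}) for 1 ≤ i ≤ m; x_j = 2x_{j-m} + 1 for m < j ≤ 2m; x_{2m+1} = 1; and x_{2m+2} = a₁x₁ + ... + a_m x_m + x_{2m+2}. -/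
theorem stmt14 (m : ℕ) (a : ℕ → ℤ) (ha : ∀ i ∈ Finset.Icc 1 m, 1 ≤ a i) :
    (∃ S ⊆ Finset.Icc 1 m, ∑ i ∈ S, a i = ∑ i ∈ Finset.Icc 1 m \ S, a i) ↔
      (∃ x : ℕ → ℝ,
        (∀ i, 1 ≤ i → i ≤ m → x i = min (x (i + m)) (x (2 * m + 1))) ∧
        (∀ j, m < j → j ≤ 2 * m → x j = 2 * x (j - m) + 1) ∧
        x (2 * m + 1) = 1 ∧
        x (2 * m + 2) = (∑ i ∈ Finset.Icc 1 m, (a i : ℝ) * x i) + x (2 * m + 2)) := by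
  constructor
  · rintro ⟨S, hS, hsum⟩
    refine ⟨fun i => if i = 2 * m + 1 then 1 else
      if 1 ≤ i ∧ i ≤ m then (if i ∈ S then 1 else -1) else
      if m < i ∧ i ≤ 2 * m then (if i - m ∈ S then (3 : ℝ) else -1) else 0, ?_, ?_, ?_, ?_⟩
    · intro i hi1 hi2
      have h1 : ¬ (i = 2 * m + 1) := by omega
      have h2 : ¬ (i + m = 2 * m + 1) := by omega
      have h3 : ¬ (1 ≤ i + m ∧ i + m ≤ m) := by omega
      have h4 : m < i + m ∧ i + m ≤ 2 * m := by omega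
      have h5 : i + m - m = i := by omega
      simp only [h1, h2, h3, h4, h5, if_neg, if_pos, ite_true, ite_false, if_true, if_false,
        and_true, and_false, not_false_iff]
      by_cases hi : i ∈ S <;> simp [hi, h1, h2, h3, h4, h5, hi1, hi2] <;> norm_num
    · intro j hj1 hj2
      have h1 : ¬ (j = 2 * m + 1) := by omega
      have h2 : ¬ (1 ≤ j ∧ j ≤ m) := by omega
      have h3 : m < j ∧ j ≤ 2 * m := by omega
      have h4 : ¬ (j - m = 2 * m + 1) := by omega
      have h5 : 1 ≤ j - m ∧ j - m ≤ m := by omega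
      by_cases hj : j - m ∈ S <;> simp [h1, h2, h3, h4, h5, hj] <;> norm_num
    · simp
    · have h1 : ¬ (2 * m + 2 = 2 * m + 1) := by omega
      have h2 : ¬ (1 ≤ 2 * m + 2 ∧ 2 * m + 2 ≤ m) := by omega
      have h3 : ¬ (m < 2 * m + 2 ∧ 2 * m + 2 ≤ 2 * m) := by omega
      simp only [h1, h2, h3, if_neg, ite_false, if_false]
      have hsum2 : ∑ i ∈ Finset.Icc 1 m,
          ((a i : ℝ) * (if i = 2 * m + 1 then 1 else
            if 1 ≤ i ∧ i ≤ m then (if i ∈ S then 1 else -1) else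
            if m < i ∧ i ≤ 2 * m then (if i - m ∈ S then (3 : ℝ) else -1) else 0))
          = ∑ i ∈ Finset.Icc 1 m, (if i ∈ S then (a i : ℝ) else -(a i : ℝ)) := by
        apply Finset.sum_congr rfl
        intro i hi
        simp only [Finset.mem_Icc] at hi
        have h1 : ¬ (i = 2 * m + 1) := by omega
        have h2 : 1 ≤ i ∧ i ≤ m := hi
        by_cases hiS : i ∈ S <;> simp [h1, h2, hiS]
      rw [hsum2]
      rw [← Finset.sum_sdiff hS]
      have e1 : ∑ i ∈ Finset.Icc 1 m \ S, (if i ∈ S then (a i : ℝ) else -(a i : ℝ))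
          = -∑ i ∈ Finset.Icc 1 m \ S, (a i : ℝ) := by
        rw [← Finset.sum_neg_distrib]
        apply Finset.sum_congr rfl
        intro i hi
        simp only [Finset.mem_sdiff] at hi
        simp [hi.2]
      have e2 : ∑ i ∈ S, (if i ∈ S then (a i : ℝ) else -(a i : ℝ))
          = ∑ i ∈ S, (a i : ℝ) := by
        apply Finset.sum_congr rfl
        intro i hi
        simp [hi]
      rw [e1, e2]
      have : (∑ i ∈ S, (a i : ℝ)) = ∑ i ∈ Finset.Icc 1 m \ S, (a i : ℝ) := by
        exact_mod_cast congrArg (fun z : ℤ => (z : ℝ)) hsum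
      linarith
  · rintro ⟨x, h1, h2, h3, h4⟩
    have key : ∀ i ∈ Finset.Icc 1 m, x i = 1 ∨ x i = -1 := by
      intro i hi
      simp only [Finset.mem_Icc] at hi
      have e1 := h1 i hi.1 hi.2
      have e2 := h2 (i + m) (by omega) (by omega)
      rw [show i + m - m = i from by omega] at e2
      rw [e2, h3] at e1
      rcases le_total (2 * x i + 1) 1 with h | h
      · right; rw [min_eq_left h] at e1; linarith
      · left; rw [min_eq_right h] at e1; linarith
    refine ⟨(Finset.Icc 1 m).filter (fun i => x i = 1), Finset.filter_subset _ _, ?_⟩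
    have hzero : ∑ i ∈ Finset.Icc 1 m, (a i : ℝ) * x i = 0 := by linarith
    rw [← Finset.sum_filter_add_sum_filter_not (Finset.Icc 1 m) (fun i => x i = 1)] at hzero
    have e1 : ∑ i ∈ (Finset.Icc 1 m).filter (fun i => x i = 1), (a i : ℝ) * x i
        = ∑ i ∈ (Finset.Icc 1 m).filter (fun i => x i = 1), (a i : ℝ) := by
      apply Finset.sum_congr rfl
      intro i hi
      simp only [Finset.mem_filter] at hi
      rw [hi.2]; ring
    have e2 : ∑ i ∈ (Finset.Icc 1 m).filter (fun i => ¬ x i = 1), (a i : ℝ) * x i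
        = -∑ i ∈ (Finset.Icc 1 m).filter (fun i => ¬ x i = 1), (a i : ℝ) := by
      rw [← Finset.sum_neg_distrib]
      apply Finset.sum_congr rfl
      intro i hi
      simp only [Finset.mem_filter] at hi
      rcases key i hi.1 with h | h
      · exact absurd h hi.2
      · rw [h]; ring
    rw [e1, e2] at hzero
    have hsd : Finset.Icc 1 m \ (Finset.Icc 1 m).filter (fun i => x i = 1)
        = (Finset.Icc 1 m).filter (fun i => ¬ x i = 1) := by
      rw [Finset.filter_not]
    rw [hsd]
    have : ∑ i ∈ (Finset.Icc 1 m).filter (fun i => x i = 1), (a i : ℝ)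
        = ∑ i ∈ (Finset.Icc 1 m).filter (fun i => ¬ x i = 1), (a i : ℝ) := by linarith
    exact_mod_cast this
end

section
/- In the system x_i = min(x_{i+m}, x_{2m+1}) for 1 ≤ i ≤ m, x_j = 2x_{j-m} + 1 for m < j ≤ 2m, x_{2m+1} = 1: every solution satisfies x_i ∈ {1, -1} for each 1 ≤ i ≤ m. -/
theorem stmt15 (m : ℕ) (x : ℕ → ℝ)
    (h1 : ∀ i, 1 ≤ i → i ≤ m → x i = min (x (i + m)) (x (2 * m + 1)))
    (h2 : ∀ j, m < j → j ≤ 2 * m → x j = 2 * x (j - m) + 1)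
    (h3 : x (2 * m + 1) = 1) :
    ∀ i, 1 ≤ i → i ≤ m → x i = 1 ∨ x i = -1 := by
  intro i h1i him
  have hj := h2 (i + m) (by omega) (by omega)
  have : i + m - m = i := by omega
  rw [this] at hj
  have hfix : x i = min (2 * x i + 1) 1 := by
    have := h1 i h1i him
    rw [hj, h3] at this
    exact this
  rcases le_or_gt 1 (2 * x i + 1) with h | h
  · left
    rw [min_eq_right h] at hfix
    exact hfix
  · right
    rw [min_eq_left h.le] at hfix
    linarith
end

section
/- Consider the system over ℝ: x₁ = min(x₃, x₄), x₂ = max(x₅, x₆), x₃ = -0.18x₁ + 0.72x₂, x₄ = 0.36x₁ - 0.18x₂, x₅ = 0.36x₁ - 0.54x₂ + 2, x₆ = -0.18x₁ - 0.36x₂ + 2. For the four linear systems obtained by fixing x₁ ∈ {x₃, x₄} and x₂ ∈ {x₅, x₆}, let x^{(ℓ)} denote the corresponding solutions; then min over the choice for x₁ of max over the choice for x₂ of x^{(ℓ)}₂ is strictly greater than 1.5, while max over the choice for x₂ of min over the choice for x₁ of x^{(ℓ)}₂ is strictly less than 1.4. In particular min-max ≠ max-min. -/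
/-- The linear system obtained from the min-max example by fixing the choice of the
min variable `x₁` (`c₁ = true` means `x₁ = x₃`, `c₁ = false` means `x₁ = x₄`) and the
max variable `x₂` (`c₂ = true` means `x₂ = x₅`, `c₂ = false` means `x₂ = x₆`).
Indices are shifted by one: `x i` is the variable `x_{i+1}` of the paper. -/
def sys18 (c₁ c₂ : Bool) (x : Fin 6 → ℝ) : Prop :=
  (x 0 = if c₁ then x 2 else x 3) ∧
  (x 1 = if c₂ then x 4 else x 5) ∧
  x 2 = -0.18 * x 0 + 0.72 * x 1 ∧
  x 3 = 0.36 * x 0 - 0.18 * x 1 ∧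
  x 4 = 0.36 * x 0 - 0.54 * x 1 + 2 ∧
  x 5 = -0.18 * x 0 - 0.36 * x 1 + 2

private def mk6 (a b c d e f : ℝ) : Fin 6 → ℝ
  | 0 => a | 1 => b | 2 => c | 3 => d | 4 => e | 5 => f

private lemma mk6_0 (a b c d e f : ℝ) : mk6 a b c d e f 0 = a := rfl
private lemma mk6_1 (a b c d e f : ℝ) : mk6 a b c d e f 1 = b := rfl
private lemma mk6_2 (a b c d e f : ℝ) : mk6 a b c d e f 2 = c := rfl
private lemma mk6_3 (a b c d e f : ℝ) : mk6 a b c d e f 3 = d := rfl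
private lemma mk6_4 (a b c d e f : ℝ) : mk6 a b c d e f 4 = e := rfl
private lemma mk6_5 (a b c d e f : ℝ) : mk6 a b c d e f 5 = f := rfl

lemma val_tt {x : Fin 6 → ℝ} (h : sys18 true true x) : x 1 = 1180/779 := by
  obtain ⟨h1, h2, h3, h4, h5, h6⟩ := h
  simp only [if_true] at h1 h2
  linarith

lemma val_tf {x : Fin 6 → ℝ} (h : sys18 true false x) : x 1 = 1475/1084 := by
  obtain ⟨h1, h2, h3, h4, h5, h6⟩ := h
  simp only [if_true, Bool.false_eq_true, if_false] at h1 h2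
  linarith

lemma val_ft {x : Fin 6 → ℝ} (h : sys18 false true x) : x 1 = 1600/1313 := by
  obtain ⟨h1, h2, h3, h4, h5, h6⟩ := h
  simp only [if_true, Bool.false_eq_true, if_false] at h1 h2
  linarith

lemma val_ff {x : Fin 6 → ℝ} (h : sys18 false false x) : x 1 = 640/419 := by
  obtain ⟨h1, h2, h3, h4, h5, h6⟩ := h
  simp only [Bool.false_eq_true, if_false] at h1 h2
  linarith

set_option maxHeartbeats 2000000 in
theorem stmt18 :
    (∀ c₁ c₂ : Bool, ∃! x : Fin 6 → ℝ, sys18 c₁ c₂ x) ∧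
    ∀ v : Bool → Bool → (Fin 6 → ℝ),
      (∀ c₁ c₂, sys18 c₁ c₂ (v c₁ c₂)) →
      1.5 < min (max (v true true 1) (v true false 1))
                (max (v false true 1) (v false false 1)) ∧
      max (min (v true true 1) (v false true 1))
          (min (v true false 1) (v false false 1)) < 1.4 := by
  constructor
  · intro c₁ c₂
    cases c₁ <;> cases c₂
    · refine ⟨mk6 (-180/419) (640/419) (2466/2095) (-180/419) (2138/2095) (640/419), ?_, ?_⟩
      · refine ⟨?_, ?_, ?_, ?_, ?_, ?_⟩ <;>
          simp only [mk6_0, mk6_1, mk6_2, mk6_3, mk6_4, mk6_5,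
            Bool.false_eq_true, if_false] <;> norm_num
      · intro y hy
        obtain ⟨h1, h2, h3, h4, h5, h6⟩ := hy
        simp only [Bool.false_eq_true, if_false] at h1 h2
        have e0 : y 0 = (-180/419 : ℝ) := by linarith
        have e1 : y 1 = (640/419 : ℝ) := by linarith
        have e2 : y 2 = (2466/2095 : ℝ) := by linarith
        have e3 : y 3 = (-180/419 : ℝ) := by linarith
        have e4 : y 4 = (2138/2095 : ℝ) := by linarith
        have e5 : y 5 = (640/419 : ℝ) := by linarith
        funext i
        fin_cases i
        exacts [e0, e1, e2, e3, e4, e5]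
    · refine ⟨mk6 (-450/1313) (1600/1313) (1233/1313) (-450/1313) (1600/1313) (2131/1313), ?_, ?_⟩
      · refine ⟨?_, ?_, ?_, ?_, ?_, ?_⟩ <;>
          simp only [mk6_0, mk6_1, mk6_2, mk6_3, mk6_4, mk6_5,
            Bool.false_eq_true, if_false, if_true] <;> norm_num
      · intro y hy
        obtain ⟨h1, h2, h3, h4, h5, h6⟩ := hy
        simp only [if_true, Bool.false_eq_true, if_false] at h1 h2
        have e0 : y 0 = (-450/1313 : ℝ) := by linarith
        have e1 : y 1 = (1600/1313 : ℝ) := by linarith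
        have e2 : y 2 = (1233/1313 : ℝ) := by linarith
        have e3 : y 3 = (-450/1313 : ℝ) := by linarith
        have e4 : y 4 = (1600/1313 : ℝ) := by linarith
        have e5 : y 5 = (2131/1313 : ℝ) := by linarith
        funext i
        fin_cases i
        exacts [e0, e1, e2, e3, e4, e5]
    · refine ⟨mk6 (225/271) (1475/1084) (225/271) (117/2168) (3391/2168) (1475/1084), ?_, ?_⟩
      · refine ⟨?_, ?_, ?_, ?_, ?_, ?_⟩ <;>
          simp only [mk6_0, mk6_1, mk6_2, mk6_3, mk6_4, mk6_5,
            Bool.false_eq_true, if_false, if_true] <;> norm_num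
      · intro y hy
        obtain ⟨h1, h2, h3, h4, h5, h6⟩ := hy
        simp only [if_true, Bool.false_eq_true, if_false] at h1 h2
        have e0 : y 0 = (225/271 : ℝ) := by linarith
        have e1 : y 1 = (1475/1084 : ℝ) := by linarith
        have e2 : y 2 = (225/271 : ℝ) := by linarith
        have e3 : y 3 = (117/2168 : ℝ) := by linarith
        have e4 : y 4 = (3391/2168 : ℝ) := by linarith
        have e5 : y 5 = (1475/1084 : ℝ) := by linarith
        funext i
        fin_cases i
        exacts [e0, e1, e2, e3, e4, e5]
    · refine ⟨mk6 (720/779) (1180/779) (720/779) (234/3895) (1180/779) (5018/3895), ?_, ?_⟩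
      · refine ⟨?_, ?_, ?_, ?_, ?_, ?_⟩ <;>
          simp only [mk6_0, mk6_1, mk6_2, mk6_3, mk6_4, mk6_5, if_true] <;> norm_num
      · intro y hy
        obtain ⟨h1, h2, h3, h4, h5, h6⟩ := hy
        simp only [if_true] at h1 h2
        have e0 : y 0 = (720/779 : ℝ) := by linarith
        have e1 : y 1 = (1180/779 : ℝ) := by linarith
        have e2 : y 2 = (720/779 : ℝ) := by linarith
        have e3 : y 3 = (234/3895 : ℝ) := by linarith
        have e4 : y 4 = (1180/779 : ℝ) := by linarith
        have e5 : y 5 = (5018/3895 : ℝ) := by linarith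
        funext i
        fin_cases i
        exacts [e0, e1, e2, e3, e4, e5]
  · intro v hv
    have htt := val_tt (hv true true)
    have htf := val_tf (hv true false)
    have hft := val_ft (hv false true)
    have hff := val_ff (hv false false)
    rw [htt, htf, hft, hff]
    constructor
    · rw [lt_min_iff]
      constructor
      · apply lt_max_of_lt_left; norm_num
      · apply lt_max_of_lt_right; norm_num
    · rw [max_lt_iff]
      refine ⟨lt_of_le_of_lt (min_le_right _ _) (by norm_num),
              lt_of_le_of_lt (min_le_left _ _) (by norm_num)⟩
end
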